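/- arXiv:1406.4567 — 3 statements merged into one kernel-verified Lean document; each statement's English description precedes it below -/
import Mathlib

section
/- For every a ∈ K with a ≠ 0: if Tr_m(a) = 1, then the set {z ∈ S : z + z⁻¹ = a⁻¹} has exactly two elements, and if Tr_m(a) = 0 then this set is empty. -/
open Finset

/-- Absolute trace-style sum `Tr_n : F → F` for `n = 2m`. -/
def trN (m : ℕ) {F : Type*} [Field F] (x : F) : F :=
  ∑ i ∈ Finset.range (2 * m), x ^ (2 ^ i)

/-- Trace-style sum `Tr_m : F → F` (meant for elements of the subfield `K`). -/
def trM (m : ℕ) {F : Type*} [Field F] (x : F) : F :=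
  ∑ i ∈ Finset.range m, x ^ (2 ^ i)

/-- `ε(0) = 1`, `ε(t) = -1` for `t ≠ 0`. -/
def eps {F : Type*} [Field F] [DecidableEq F] (t : F) : ℤ :=
  if t = 0 then 1 else -1

/-- Kloosterman sum `k_m(μ) = ∑_{x ∈ K, x ≠ 0} χ_m(x + μ x⁻¹)`. -/
def klooM (m : ℕ) {F : Type*} [Field F] [Fintype F] [DecidableEq F] (μ : F) : ℤ :=
  ∑ x ∈ Finset.univ.filter (fun x : F => x ^ (2 ^ m) = x ∧ x ≠ 0),
    eps (trM m (x + μ * x⁻¹))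

/-- Kloosterman sum over the big field: `k_n(μ) = ∑_{x ∈ F, x ≠ 0} χ_n(x + μ x⁻¹)`. -/
def klooN (m : ℕ) {F : Type*} [Field F] [Fintype F] [DecidableEq F] (μ : F) : ℤ :=
  ∑ x ∈ Finset.univ.filter (fun x : F => x ≠ 0), eps (trN m (x + μ * x⁻¹))

/-- Walsh transform of `h : F → F` (with values in `{0,1}`) at `a`. -/
def walsh (m : ℕ) {F : Type*} [Field F] [Fintype F] [DecidableEq F] (h : F → F) (a : F) : ℤ :=
  ∑ x : F, eps (h x + trN m (a * x))

/-- The Boolean function `f_{λ,μ}(x) = Tr_n(λ x^{2^m+1}) + Tr_n(x)·Tr_n(μ x^{2^m-1})`. -/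
def fFun (m : ℕ) {F : Type*} [Field F] (l μ : F) : F → F :=
  fun x => trN m (l * x ^ (2 ^ m + 1)) + trN m x * trN m (μ * x ^ (2 ^ m - 1))

/-- The Boolean function
`g_{λ,μ}(x) = (1 + Tr_n(x))·Tr_n(λ x^{2^m+1}) + Tr_n(x)·Tr_n(μ x^{2^m-1})`. -/
def gFun (m : ℕ) {F : Type*} [Field F] (l μ : F) : F → F :=
  fun x => (1 + trN m x) * trN m (l * x ^ (2 ^ m + 1)) +
    trN m x * trN m (μ * x ^ (2 ^ m - 1))


lemma aux_char2 {F : Type*} [Field F] [Fintype F] {m : ℕ} (hm : 0 < m)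
    (hcard : Fintype.card F = 2 ^ (2 * m)) : CharP F 2 := by
  have h := FiniteField.cast_card_eq_zero F
  rw [hcard] at h
  push_cast at h
  have h2 : (2 : F) = 0 := (pow_eq_zero_iff (by omega : 2 * m ≠ 0)).mp h
  have hr := CharP.ringChar_of_prime_eq_zero Nat.prime_two h2
  rw [← hr]; exact ringChar.charP F

lemma aux_tel {F : Type*} [Field F] [CharP F 2] (n : ℕ) (y : F) :
    ∑ i ∈ Finset.range n, (y ^ 2 + y) ^ 2 ^ i = y ^ 2 ^ n + y := by
  have h : ∀ i, (y ^ 2 + y) ^ 2 ^ i = y ^ 2 ^ (i + 1) - y ^ 2 ^ i := by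
    intro i
    rw [add_pow_char_pow, CharTwo.sub_eq_add, ← pow_mul, ← pow_succ']
  calc ∑ i ∈ Finset.range n, (y ^ 2 + y) ^ 2 ^ i
      = ∑ i ∈ Finset.range n, (y ^ 2 ^ (i + 1) - y ^ 2 ^ i) :=
        Finset.sum_congr rfl fun i _ => h i
    _ = y ^ 2 ^ n - y ^ 2 ^ 0 := Finset.sum_range_sub (fun i => y ^ 2 ^ i) n
    _ = y ^ 2 ^ n + y := by rw [CharTwo.sub_eq_add, pow_zero, pow_one]

lemma aux_add {F : Type*} [Field F] [CharP F 2] (n : ℕ) (u v : F) :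
    ∑ i ∈ Finset.range n, (u + v) ^ 2 ^ i
      = (∑ i ∈ Finset.range n, u ^ 2 ^ i) + ∑ i ∈ Finset.range n, v ^ 2 ^ i := by
  rw [← Finset.sum_add_distrib]
  exact Finset.sum_congr rfl fun i _ => add_pow_char_pow u v 2 i

lemma aux_exists {F : Type*} [Field F] [Fintype F] [DecidableEq F] [CharP F 2] {m : ℕ}
    (hm : 0 < m) (hcard : Fintype.card F = 2 ^ (2 * m)) (b : F)
    (hb : ∑ i ∈ Finset.range (2 * m), b ^ 2 ^ i = 0) : ∃ y : F, y ^ 2 + y = b := by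
  classical
  have h2 : (2 : F) = 0 := CharTwo.two_eq_zero
  set n := 2 * m with hn
  set f : F → F := fun y => y ^ 2 + y with hf
  set T : Finset F :=
    Finset.univ.filter (fun x : F => ∑ i ∈ Finset.range n, x ^ 2 ^ i = 0) with hT
  have hsub : Finset.univ.image f ⊆ T := by
    intro x hx
    obtain ⟨y, -, rfl⟩ := Finset.mem_image.mp hx
    simp only [hT, Finset.mem_filter, Finset.mem_univ, true_and]
    show ∑ i ∈ Finset.range n, (y ^ 2 + y) ^ 2 ^ i = 0
    rw [aux_tel]
    have hyc : y ^ 2 ^ n = y := by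
      have := FiniteField.pow_card y
      rwa [hcard] at this
    rw [hyc, CharTwo.add_self_eq_zero]
  have hT_card : T.card ≤ 2 ^ (n - 1) := by
    set P : Polynomial F := ∑ i ∈ Finset.range n, Polynomial.X ^ 2 ^ i with hP
    have hPne : P ≠ 0 := by
      intro h
      have h1 : P.coeff 1 = 1 := by
        rw [hP, Polynomial.finset_sum_coeff]
        rw [Finset.sum_eq_single 0]
        · simp
        · intro i _ hi
          rw [Polynomial.coeff_X_pow, if_neg]
          intro hcon
          exact hi (Nat.pow_right_injective le_rfl (by simpa using hcon.symm))
        · intro h0; exact absurd (Finset.mem_range.mpr (by omega)) h0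
      rw [h] at h1; simp at h1
    have hdeg : P.natDegree ≤ 2 ^ (n - 1) := by
      apply Polynomial.natDegree_sum_le_of_forall_le
      intro i hi
      rw [Polynomial.natDegree_X_pow]
      exact Nat.pow_le_pow_right (by norm_num) (by have := Finset.mem_range.mp hi; omega)
    have hroots : T ⊆ P.roots.toFinset := by
      intro x hx
      rw [Multiset.mem_toFinset, Polynomial.mem_roots']
      refine ⟨hPne, ?_⟩
      have hx2 := (Finset.mem_filter.mp hx).2
      simp only [Polynomial.IsRoot, hP, Polynomial.eval_finset_sum, Polynomial.eval_pow,
        Polynomial.eval_X]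
      exact hx2
    calc T.card ≤ P.roots.toFinset.card := Finset.card_le_card hroots
      _ ≤ Multiset.card P.roots := P.roots.toFinset_card_le
      _ ≤ P.natDegree := P.card_roots'
      _ ≤ 2 ^ (n - 1) := hdeg
  have himg : 2 ^ (n - 1) ≤ (Finset.univ.image f).card := by
    have hfib := Finset.card_eq_sum_card_fiberwise
      (f := f) (s := (Finset.univ : Finset F)) (t := Finset.univ.image f)
      (fun x _ => Finset.mem_image_of_mem f (Finset.mem_univ x))
    have hle : ∀ c ∈ Finset.univ.image f,
        (Finset.univ.filter (fun y => f y = c)).card ≤ 2 := by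
      intro c hc
      obtain ⟨y, -, rfl⟩ := Finset.mem_image.mp hc
      have hss : Finset.univ.filter (fun y' => f y' = f y) ⊆ {y, y + 1} := by
        intro y' hy'
        have h' : y' ^ 2 + y' = y ^ 2 + y := (Finset.mem_filter.mp hy').2
        have hw : (y' + y) * ((y' + y) + 1) = 0 := by
          linear_combination h' + (y ^ 2 + y + y' * y) * h2
        rcases mul_eq_zero.mp hw with h | h
        · simp only [Finset.mem_insert, Finset.mem_singleton]
          left; linear_combination h - y * h2
        · simp only [Finset.mem_insert, Finset.mem_singleton]
          right; linear_combination h - (y + 1) * h2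
      calc (Finset.univ.filter (fun y' => f y' = f y)).card
          ≤ ({y, y + 1} : Finset F).card := Finset.card_le_card hss
        _ ≤ 2 := by
            refine (Finset.card_insert_le _ _).trans ?_
            simp
      -- end
    have hcardle : Fintype.card F ≤ (Finset.univ.image f).card * 2 := by
      rw [← Finset.card_univ, hfib]
      calc ∑ c ∈ Finset.univ.image f, (Finset.univ.filter (fun y => f y = c)).card
          ≤ ∑ _c ∈ Finset.univ.image f, 2 := Finset.sum_le_sum hle
        _ = (Finset.univ.image f).card * 2 := by rw [Finset.sum_const, smul_eq_mul]
    have hpow : 2 ^ (n - 1) * 2 = 2 ^ n := by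
      rw [← pow_succ]; congr 1; omega
    refine Nat.le_of_mul_le_mul_right ?_ (by norm_num : 0 < 2)
    rw [hpow, ← hcard]
    exact hcardle
  have heq : Finset.univ.image f = T :=
    Finset.eq_of_subset_of_card_le hsub (le_trans hT_card himg)
  have hbT : b ∈ T := by
    simp only [hT, Finset.mem_filter, Finset.mem_univ, true_and]
    exact hb
  rw [← heq] at hbT
  obtain ⟨y, -, hy⟩ := Finset.mem_image.mp hbT
  exact ⟨y, hy⟩


theorem stmt0 (m : ℕ) (hm : 0 < m) (F : Type*) [Field F] [Fintype F] [DecidableEq F]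
    (hcard : Fintype.card F = 2 ^ (2 * m))
    (a : F) (ha0 : a ≠ 0) (haK : a ^ (2 ^ m) = a) :
    (trM m a = 1 →
      (Finset.univ.filter
        (fun z : F => z ^ (2 ^ m + 1) = 1 ∧ z + z⁻¹ = a⁻¹)).card = 2) ∧
    (trM m a = 0 →
      Finset.univ.filter
        (fun z : F => z ^ (2 ^ m + 1) = 1 ∧ z + z⁻¹ = a⁻¹) = ∅) := by
  haveI hchar : CharP F 2 := aux_char2 hm hcard
  have h2 : (2 : F) = 0 := CharTwo.two_eq_zero
  have hainv : a * a⁻¹ = 1 := mul_inv_cancel₀ ha0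
  have htrM : ∀ x : F, trM m x = ∑ i ∈ Finset.range m, x ^ 2 ^ i := fun x => rfl
  have hsq : trM m (a ^ 2) = trM m a := by
    rw [htrM, htrM]
    have hx2 : a ^ 2 = (a ^ 2 + a) + a := by linear_combination (-a) * h2
    rw [hx2, aux_add, aux_tel, haK, CharTwo.add_self_eq_zero, zero_add]
  constructor
  · -- trM m a = 1 case
    intro h1
    have htrN0 : ∑ i ∈ Finset.range (2 * m), a ^ 2 ^ i = 0 := by
      have hshift : ∑ i ∈ Finset.range m, a ^ 2 ^ (m + i)
          = ∑ i ∈ Finset.range m, a ^ 2 ^ i :=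
        Finset.sum_congr rfl fun i _ => by rw [pow_add, pow_mul, haK]
      rw [two_mul, Finset.sum_range_add, hshift]
      exact CharTwo.add_self_eq_zero _
    have hb : ∑ i ∈ Finset.range (2 * m), (a ^ 2) ^ 2 ^ i = 0 := by
      have hsplit : (a : F) ^ 2 = (a ^ 2 + a) + a := by linear_combination (-a) * h2
      rw [hsplit, aux_add, aux_tel, htrN0, add_zero]
      have haa : a ^ 2 ^ (2 * m) = a := by rw [two_mul, pow_add, pow_mul, haK, haK]
      rw [haa]; exact CharTwo.add_self_eq_zero a
    obtain ⟨y, hy⟩ := aux_exists hm hcard _ hb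
    have hy0 : y ≠ 0 := by
      rintro rfl
      apply ha0
      have : a ^ 2 = 0 := by rw [← hy]; ring
      exact (pow_eq_zero_iff two_ne_zero).mp this
    have hym : y ^ 2 ^ m = y + 1 := by
      have ht : trM m (a ^ 2) = y ^ 2 ^ m + y := by rw [htrM, ← hy, aux_tel]
      have ht1 : y ^ 2 ^ m + y = 1 := by rw [← ht, hsq, h1]
      linear_combination ht1 - y * h2
    have hz0 : a⁻¹ * y ≠ 0 := mul_ne_zero (inv_ne_zero ha0) hy0
    have hz1 : (a⁻¹ * y) ^ (2 ^ m + 1) = 1 := by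
      rw [pow_add, pow_one, mul_pow, inv_pow, haK, hym]
      linear_combination (a⁻¹) ^ 2 * hy + (a * a⁻¹ + 1) * hainv
    have hzinv : (a⁻¹ * y)⁻¹ = (a⁻¹ * y) ^ 2 ^ m := by
      apply inv_eq_of_mul_eq_one_left
      rw [← pow_one (a⁻¹ * y), ← pow_mul, ← pow_add]
      simpa using hz1
    have hz2 : (a⁻¹ * y) + (a⁻¹ * y)⁻¹ = a⁻¹ := by
      rw [hzinv, mul_pow, inv_pow, haK, hym]
      linear_combination (a⁻¹ * y) * h2
    set z := a⁻¹ * y with hzdef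
    have hzz : z ≠ z⁻¹ := by
      intro h
      have hsqone : z ^ 2 = 1 := by
        rw [pow_two]; nth_rw 2 [h]; exact mul_inv_cancel₀ hz0
      have hz1sq : (z + 1) ^ 2 = 0 := by linear_combination hsqone + (z + 1) * h2
      have hz1' : z + 1 = 0 := (pow_eq_zero_iff two_ne_zero).mp hz1sq
      have hzone : z = 1 := by linear_combination hz1' - h2
      apply inv_ne_zero ha0
      rw [← hz2, hzone, inv_one]
      exact CharTwo.add_self_eq_zero 1
    have hset : Finset.univ.filter
        (fun w : F => w ^ (2 ^ m + 1) = 1 ∧ w + w⁻¹ = a⁻¹) = {z, z⁻¹} := by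
      ext w
      simp only [Finset.mem_filter, Finset.mem_univ, true_and, Finset.mem_insert,
        Finset.mem_singleton]
      constructor
      · rintro ⟨hw1, hw2⟩
        have hw0 : w ≠ 0 := by
          rintro rfl
          rw [zero_pow (by positivity)] at hw1
          exact zero_ne_one hw1
        have hwinv : w * w⁻¹ = 1 := mul_inv_cancel₀ hw0
        have hzzinv : z * z⁻¹ = 1 := mul_inv_cancel₀ hz0
        have hw' : w ^ 2 + a⁻¹ * w + 1 = 0 := by
          linear_combination w * hw2 - hwinv + a⁻¹ * w * h2
        have hz' : z ^ 2 + a⁻¹ * z + 1 = 0 := by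
          linear_combination z * hz2 - hzzinv + a⁻¹ * z * h2
        have hfac : (w + z) * ((w + z) + a⁻¹) = 0 := by
          linear_combination hw' - hz' + (w * z + z ^ 2 + a⁻¹ * z) * h2
        rcases mul_eq_zero.mp hfac with h | h
        · left; linear_combination h - z * h2
        · right
          have hzi : z⁻¹ = z + a⁻¹ := by linear_combination hz2 - z * h2
          rw [hzi]
          linear_combination h - (z + a⁻¹) * h2
      · rintro (rfl | rfl)
        · exact ⟨hz1, hz2⟩
        · refine ⟨?_, ?_⟩
          · rw [inv_pow, hz1, inv_one]
          · rw [inv_inv, add_comm]; exact hz2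
    rw [hset, Finset.card_insert_of_notMem (by simpa using hzz), Finset.card_singleton]
  · -- trM m a = 0 case
    intro h0
    rw [Finset.eq_empty_iff_forall_notMem]
    intro z hz
    rw [Finset.mem_filter] at hz
    obtain ⟨-, hz1, hz2⟩ := hz
    have hz0 : z ≠ 0 := by
      rintro rfl
      rw [zero_pow (by positivity)] at hz1
      exact zero_ne_one hz1
    have hzinv : z * z⁻¹ = 1 := mul_inv_cancel₀ hz0
    have hzm : z ^ 2 ^ m = z⁻¹ := by
      apply eq_inv_of_mul_eq_one_left
      rw [← pow_one z, ← pow_mul, ← pow_add]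
      simpa using hz1
    have key : a * z ^ 2 + a = z := by
      linear_combination (a * z) * hz2 - a * hzinv + z * hainv
    have hy : (a * z) ^ 2 + (a * z) = a ^ 2 := by
      linear_combination a * key + (a * z - a ^ 2) * h2
    have hone : trM m (a ^ 2) = 1 := by
      rw [htrM, ← hy, aux_tel, mul_pow, haK, hzm]
      linear_combination a * hz2 + hainv
    rw [hsq, h0] at hone
    exact one_ne_zero hone.symm
end

section
/- Let H₁ = {x ∈ K : x ≠ 0 and Tr_m(x⁻¹) = 1}. Then H₁ = {u + ū : u ∈ S, u ≠ 1}; moreover, for all u, v ∈ S with u ≠ 1 and v ≠ 1, one has u + ū = v + v̄ if and only if u = v or u = v̄ (so the map u ↦ u + ū from S \ {1} onto H₁ is two-to-one). -/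
open Finset

/-!
In characteristic 2, conjugation `u ↦ u ^ 2 ^ m` is inversion on `S`, and
`(u + u⁻¹)⁻¹ = w ^ 2 + w` with `w = (u + 1)⁻¹`, so `Tr_m((u + ū)⁻¹) = w̄ + w = 1`.
Conversely, for `x ∈ K` with `Tr_m(x⁻¹) = 1`, `c = x⁻²` has `Tr_m(c) = 1` and `Tr_n(c) = 0`, so
`s ^ 2 + s = c` is solvable in `F`, but not in `K` since `Tr_m(s ^ 2 + s) = s̄ + s`. Then `s` and `s̄` are the two roots, so
`s + s̄ = 1`, `s s̄ = c`, and `u = x s` lies in `S` with `u + ū = x`.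
Injectivity: `u + u⁻¹ + v + v⁻¹ = (u + v)(uv + 1) / (uv)`.
-/

theorem trM_succ {F : Type*} [Field F] (k : ℕ) (a : F) : trM (k + 1) a = trM k a + a ^ 2 ^ k :=
  sum_range_succ _ _

theorem pow_add_one_eq_one_iff {F : Type*} [Field F] {u : F} {q : ℕ} :
    u ^ (q + 1) = 1 ↔ u ≠ 0 ∧ u ^ q = u⁻¹ := by
  refine ⟨fun h => ?_, fun ⟨h0, h⟩ => by rw [pow_succ, h, inv_mul_cancel₀ h0]⟩
  have h0 : u ≠ 0 := by rintro rfl; simp at h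
  exact ⟨h0, eq_inv_of_mul_eq_one_left (by rwa [← pow_succ])⟩

section CharTwo

variable {F : Type*} [Field F] [CharP F 2]

theorem trM_add (k : ℕ) (a b : F) : trM k (a + b) = trM k a + trM k b := by
  simp only [trM, add_pow_char_pow, sum_add_distrib]

theorem trM_sq_add_self (k : ℕ) (w : F) : trM k (w ^ 2 + w) = w ^ 2 ^ k + w := by
  induction k with
  | zero => simp [trM, CharTwo.add_self_eq_zero]
  | succ k ih =>
    rw [trM_succ, ih, add_pow_char_pow, ← pow_mul, ← pow_succ']
    linear_combination w ^ 2 ^ k * CharTwo.two_eq_zero (R := F)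

theorem trM_sq (k : ℕ) (a : F) : trM k (a ^ 2) = trM k a + a ^ 2 ^ k + a := by
  have h := trM_add k (a ^ 2 + a) a
  rw [add_assoc, CharTwo.add_self_eq_zero, add_zero, trM_sq_add_self] at h
  rw [h]
  ring

theorem sq_trM (k : ℕ) (a : F) : trM k a ^ 2 = trM k (a ^ 2) := by
  simp only [trM, sum_pow_char, pow_right_comm _ 2]

theorem trM_two_mul_eq_zero (k : ℕ) {a : F} (ha : a ^ 2 ^ k = a) : trM (2 * k) a = 0 := by
  have hperiod : ∀ i, a ^ 2 ^ (k + i) = a ^ 2 ^ i := fun i => by rw [pow_add, pow_mul, ha]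
  simp only [trM, two_mul, sum_range_add, hperiod, CharTwo.add_self_eq_zero]

theorem exists_trM_eq_one [Fintype F] {k : ℕ} (hcard : Fintype.card F = 2 ^ k) :
    ∃ θ : F, trM k θ = 1 := by
  let _ : Algebra (ZMod 2) F := ZMod.algebra F 2
  have hk : Module.finrank (ZMod 2) F = k := by
    rw [Module.card_eq_pow_finrank (K := ZMod 2), ZMod.card] at hcard
    exact Nat.pow_right_injective le_rfl hcard
  obtain ⟨θ, hθ⟩ := Algebra.trace_surjective (ZMod 2) F 1
  refine ⟨θ, ?_⟩
  have := FiniteField.algebraMap_trace_eq_sum_pow (ZMod 2) F θ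
  rw [hθ, map_one, hk, Nat.card_zmod] at this
  exact this.symm

/-- Given `θ` with `trM k θ = 1`, the classical explicit solution of `s ^ 2 + s = c`
(additive Hilbert 90 for `𝔽_{2^k}` over `𝔽₂`). -/
def artinSchreierRoot (k : ℕ) (θ c : F) : F :=
  ∑ i ∈ range k, trM i c * θ ^ 2 ^ i

theorem artinSchreierRoot_sq_add_self {k : ℕ} {θ c : F} (hθ : trM k θ = 1)
    (hθk : θ ^ 2 ^ k = θ) (hc : trM k c = 0) :
    artinSchreierRoot k θ c ^ 2 + artinSchreierRoot k θ c = c := by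
  have hpartial : ∀ i, trM i c ^ 2 = trM (i + 1) c + c := fun i => by
    rw [sq_trM, trM_sq, trM_succ]
  have hsq : artinSchreierRoot k θ c ^ 2
      = ∑ i ∈ range k, (trM (i + 1) c * θ ^ 2 ^ (i + 1) + c * θ ^ 2 ^ (i + 1)) := by
    rw [artinSchreierRoot, sum_pow_char]
    refine sum_congr rfl fun i _ => ?_
    rw [mul_pow, hpartial, ← pow_mul, ← pow_succ]
    ring
  have htelescope :
      ∑ i ∈ range k, (trM (i + 1) c * θ ^ 2 ^ (i + 1) + trM i c * θ ^ 2 ^ i) = 0 := by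
    have := sum_range_sub (fun i => trM i c * θ ^ 2 ^ i) k
    simp only [CharTwo.sub_eq_add] at this
    rw [this, hc, zero_mul, zero_add, trM, range_zero, sum_empty, zero_mul]
  have hθsq : trM k (θ ^ 2) = 1 := by
    rw [trM_sq, hθ, hθk, add_assoc, CharTwo.add_self_eq_zero, add_zero]
  calc artinSchreierRoot k θ c ^ 2 + artinSchreierRoot k θ c
      = ∑ i ∈ range k, (trM (i + 1) c * θ ^ 2 ^ (i + 1) + trM i c * θ ^ 2 ^ i)
          + c * trM k (θ ^ 2) := by
        rw [hsq, artinSchreierRoot, trM, mul_sum, ← sum_add_distrib, ← sum_add_distrib]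
        refine sum_congr rfl fun i _ => ?_
        ring
    _ = c := by rw [htelescope, hθsq, zero_add, mul_one]

theorem exists_sq_add_self_eq [Fintype F] {k : ℕ} (hcard : Fintype.card F = 2 ^ k) {c : F}
    (hc : trM k c = 0) : ∃ s : F, s ^ 2 + s = c := by
  obtain ⟨θ, hθ⟩ := exists_trM_eq_one hcard
  exact ⟨_, artinSchreierRoot_sq_add_self hθ (hcard ▸ FiniteField.pow_card θ) hc⟩

theorem add_eq_one_and_mul_eq_of_sq_add_self_eq {s t c : F} (hs : s ^ 2 + s = c)
    (ht : t ^ 2 + t = c) (hst : s ≠ t) : s + t = 1 ∧ s * t = c := by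
  have hsum : (s + t) * (s + t + 1) = 0 := by
    linear_combination hs - ht + (s * t + t ^ 2 + t) * CharTwo.two_eq_zero (R := F)
  have h1 : s + t = 1 := by
    rw [mul_eq_zero, CharTwo.add_eq_zero, CharTwo.add_eq_zero] at hsum
    exact hsum.resolve_left hst
  refine ⟨h1, ?_⟩
  linear_combination -hs + s * h1 + (s - c) * CharTwo.two_eq_zero (R := F)

theorem add_inv_ne_zero {u : F} (hu0 : u ≠ 0) (hu1 : u ≠ 1) : u + u⁻¹ ≠ 0 := by
  rw [Ne, CharTwo.add_eq_zero, ← mul_eq_one_iff_eq_inv₀ hu0, mul_self_eq_one_iff, CharTwo.neg_eq,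
    or_self]
  exact hu1

theorem inv_add_inv_eq_sq_add_self {u : F} (hu0 : u ≠ 0) (hu1 : u ≠ 1) :
    (u + u⁻¹)⁻¹ = (u + 1)⁻¹ ^ 2 + (u + 1)⁻¹ := by
  have hu1' : u + 1 ≠ 0 := by rwa [Ne, CharTwo.add_eq_zero]
  rw [eq_comm, ← mul_eq_one_iff_eq_inv₀ (add_inv_ne_zero hu0 hu1)]
  field_simp
  linear_combination CharTwo.two_eq_zero (R := F)

theorem add_inv_eq_add_inv_iff {u v : F} (hu : u ≠ 0) (hv : v ≠ 0) :
    u + u⁻¹ = v + v⁻¹ ↔ u = v ∨ u = v⁻¹ := by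
  have key : u + u⁻¹ + (v + v⁻¹) = (u + v) * (u * v + 1) / (u * v) := by
    field_simp
    ring
  rw [← CharTwo.add_eq_zero, key, div_eq_zero_iff, mul_eq_zero, CharTwo.add_eq_zero,
    CharTwo.add_eq_zero, mul_eq_one_iff_eq_inv₀ hv, or_iff_left (mul_ne_zero hu hv)]

theorem add_inv_pow_eq_self {k : ℕ} {u : F} (hu : u ^ 2 ^ k = u⁻¹) :
    (u + u⁻¹) ^ 2 ^ k = u + u⁻¹ := by
  rw [add_pow_char_pow, hu, inv_pow, hu, inv_inv, add_comm]

theorem trM_inv_add_inv_eq_one {k : ℕ} {u : F} (hu0 : u ≠ 0) (hu1 : u ≠ 1)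
    (hu : u ^ 2 ^ k = u⁻¹) : trM k (u + u⁻¹)⁻¹ = 1 := by
  have hu1' : u + 1 ≠ 0 := by rwa [Ne, CharTwo.add_eq_zero]
  rw [inv_add_inv_eq_sq_add_self hu0 hu1, trM_sq_add_self, inv_pow, add_pow_char_pow, hu, one_pow]
  field_simp
  rw [add_comm 1 u, mul_div_cancel_right₀ u hu1']

theorem exists_add_pow_eq_of_trM_inv_eq_one [Fintype F] {m : ℕ}
    (hcard : Fintype.card F = 2 ^ (2 * m)) {x : F} (hxK : x ^ 2 ^ m = x) (hx0 : x ≠ 0)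
    (htr : trM m x⁻¹ = 1) : ∃ u : F, u ^ (2 ^ m + 1) = 1 ∧ u ≠ 1 ∧ x = u + u ^ 2 ^ m := by
  have hinvK : x⁻¹ ^ 2 ^ m = x⁻¹ := by rw [inv_pow, hxK]
  have hcK : (x⁻¹ ^ 2) ^ 2 ^ m = x⁻¹ ^ 2 := by rw [pow_right_comm, hinvK]
  have hc : trM m (x⁻¹ ^ 2) = 1 := by
    rw [trM_sq, htr, hinvK, add_assoc, CharTwo.add_self_eq_zero, add_zero]
  obtain ⟨s, hs⟩ := exists_sq_add_self_eq hcard (trM_two_mul_eq_zero m hcK)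
  have hs' : (s ^ 2 ^ m) ^ 2 + s ^ 2 ^ m = x⁻¹ ^ 2 := by
    rw [← pow_right_comm, ← add_pow_char_pow, hs, hcK]
  have hsK : s ^ 2 ^ m ≠ s := fun h => by
    have := trM_sq_add_self m s
    rw [hs, hc, h, CharTwo.add_self_eq_zero] at this
    exact one_ne_zero this
  obtain ⟨hsum, hprod⟩ := add_eq_one_and_mul_eq_of_sq_add_self_eq hs hs' (Ne.symm hsK)
  have hu : (x * s) ^ 2 ^ m = x * s ^ 2 ^ m := by rw [mul_pow, hxK]
  refine ⟨x * s, ?_, fun h => hsK ?_, ?_⟩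
  · rw [pow_succ, hu, show x * s ^ 2 ^ m * (x * s) = x ^ 2 * (s * s ^ 2 ^ m) by ring, hprod,
      ← mul_pow, mul_inv_cancel₀ hx0, one_pow]
  · exact mul_left_cancel₀ hx0 (by rw [← hu, h, one_pow])
  · rw [hu, ← mul_add, hsum, mul_one]

end CharTwo

theorem stmt1_general (m : ℕ) (F : Type*) [Field F] [Fintype F]
    (hcard : Fintype.card F = 2 ^ (2 * m)) :
    ({x : F | x ^ (2 ^ m) = x ∧ x ≠ 0 ∧ trM m x⁻¹ = 1} =
      {y : F | ∃ u : F, u ^ (2 ^ m + 1) = 1 ∧ u ≠ 1 ∧ y = u + u ^ (2 ^ m)}) ∧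
    (∀ u v : F, u ^ (2 ^ m + 1) = 1 → u ≠ 1 → v ^ (2 ^ m + 1) = 1 → v ≠ 1 →
      (u + u ^ (2 ^ m) = v + v ^ (2 ^ m) ↔ (u = v ∨ u = v ^ (2 ^ m)))) := by
  have : CharP F 2 := charP_of_card_eq_prime_pow hcard
  refine ⟨Set.ext fun x => ⟨fun ⟨hxK, hx0, htr⟩ =>
    exists_add_pow_eq_of_trM_inv_eq_one hcard hxK hx0 htr, ?_⟩, fun u v hu _ hv _ => ?_⟩
  · rintro ⟨u, hu, hu1, rfl⟩
    obtain ⟨hu0, hu⟩ := pow_add_one_eq_one_iff.mp hu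
    rw [hu]
    exact ⟨add_inv_pow_eq_self hu, add_inv_ne_zero hu0 hu1,
      trM_inv_add_inv_eq_one hu0 hu1 hu⟩
  · obtain ⟨hu0, hu⟩ := pow_add_one_eq_one_iff.mp hu
    obtain ⟨hv0, hv⟩ := pow_add_one_eq_one_iff.mp hv
    rw [hu, hv]
    exact add_inv_eq_add_inv_iff hu0 hv0

theorem stmt1 (m : ℕ) (hm : 0 < m) (F : Type*) [Field F] [Fintype F] [DecidableEq F]
    (hcard : Fintype.card F = 2 ^ (2 * m)) :
    ({x : F | x ^ (2 ^ m) = x ∧ x ≠ 0 ∧ trM m x⁻¹ = 1} =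
      {y : F | ∃ u : F, u ^ (2 ^ m + 1) = 1 ∧ u ≠ 1 ∧ y = u + u ^ (2 ^ m)}) ∧
    (∀ u v : F, u ^ (2 ^ m + 1) = 1 → u ≠ 1 → v ^ (2 ^ m + 1) = 1 → v ≠ 1 →
      (u + u ^ (2 ^ m) = v + v ^ (2 ^ m) ↔ (u = v ∨ u = v ^ (2 ^ m)))) :=
  stmt1_general m F hcard
end

section
/- For every μ ∈ K with μ ≠ 0: ∑_{z ∈ S} χ_m(μ·(z + z⁻¹)) = −k_m(μ). (Note that μ·(z + z⁻¹) ∈ K for every z ∈ S, so χ_m applies.) -/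
open Finset

/-!
The map `z ↦ z + z⁻¹` sends both `S` and `K^×` into `K`. Its fibres have at most two points,
since `y + y⁻¹ = x + x⁻¹` forces `y = x` or `y = x⁻¹`, and over `u ≠ 0` the fibres in `S` and
in `K^×` are disjoint because `S ∩ K^× = {1}` lies over `0`. As `|S| + |K^×| = 2|K|`, every
`u ∈ K` is hit exactly twice in total, so `∑_S f (z + z⁻¹) + ∑_{K^×} f (y + y⁻¹) = 2 ∑_K f`
for every `f`. For `f u = χ_m(μ u)` the right-hand side vanishes (`Tr_m` is balanced on `K`),
and the substitution `x² = μ y` turns `k_m(μ)` into the sum over `K^×`.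
-/

theorem charP_two_of_card_eq_two_pow {F : Type*} [Field F] [Fintype F] {n : ℕ}
    (hcard : Fintype.card F = 2 ^ n) : CharP F 2 := by
  have hn : n ≠ 0 := by
    rintro rfl
    simpa [hcard] using Fintype.one_lt_card (α := F)
  refine ringChar.of_eq (FiniteField.even_card_iff_char_two.mpr ?_)
  rw [hcard, Nat.pow_mod, Nat.mod_self, zero_pow hn, Nat.zero_mod]

theorem card_filter_pow_eq_one_of_dvd {F : Type*} [Field F] [Fintype F] [DecidableEq F] {d : ℕ}
    (hd : d ∣ Fintype.card F - 1) : #{x : F | x ^ d = 1} = d := by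
  have hq : 1 < Fintype.card F := Fintype.one_lt_card
  have hd0 : 0 < d := Nat.pos_of_dvd_of_pos hd (by omega)
  obtain ⟨g, hg⟩ := IsCyclic.exists_ofOrder_eq_natCard (α := Fˣ)
  rw [Nat.card_eq_fintype_card, Fintype.card_units] at hg
  rw [← hg] at hd
  have hord : orderOf (g ^ (orderOf g / d)) = d := orderOf_pow_orderOf_div (by omega) hd
  have hζ : IsPrimitiveRoot ((g ^ (orderOf g / d) : Fˣ) : F) d :=
    IsPrimitiveRoot.coe_units_iff.mpr <| by
      simpa only [hord] using IsPrimitiveRoot.orderOf (g ^ (orderOf g / d))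
  conv_rhs => rw [← hζ.card_nthRootsFinset]
  congr 1
  ext x
  simp [Polynomial.mem_nthRootsFinset hd0]

theorem eq_or_eq_inv_of_add_inv_eq_add_inv {F : Type*} [Field F] {x y : F} (hx : x ≠ 0)
    (hy : y ≠ 0) (h : y + y⁻¹ = x + x⁻¹) : y = x ∨ y = x⁻¹ := by
  have : (y - x) * (x * y - 1) = 0 := by
    field_simp at h
    linear_combination h
  rcases mul_eq_zero.mp this with h | h
  · exact Or.inl (sub_eq_zero.mp h)
  · exact Or.inr (eq_inv_of_mul_eq_one_right (sub_eq_zero.mp h))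

theorem card_filter_add_inv_eq_le_two {F : Type*} [Field F] [DecidableEq F] {s : Finset F}
    (hs : (0 : F) ∉ s) (u : F) : #{z ∈ s | z + z⁻¹ = u} ≤ 2 := by
  obtain ⟨x, hx⟩ | hempty := ({z ∈ s | z + z⁻¹ = u} : Finset F).eq_empty_or_nonempty.symm
  · obtain ⟨hxs, rfl⟩ := mem_filter.mp hx
    have hx0 : x ≠ 0 := fun h => hs (h ▸ hxs)
    calc #{z ∈ s | z + z⁻¹ = x + x⁻¹} ≤ #({x, x⁻¹} : Finset F) := by
          refine card_le_card fun y hy => ?_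
          obtain ⟨hys, hyx⟩ := mem_filter.mp hy
          simpa using eq_or_eq_inv_of_add_inv_eq_add_inv hx0 (fun h => hs (h ▸ hys)) hyx
      _ ≤ 2 := card_le_two
  · simp [hempty]

theorem pos_of_card_eq_two_pow_two_mul {F : Type*} [Field F] [Fintype F] {m : ℕ}
    (hcard : Fintype.card F = 2 ^ (2 * m)) : 0 < m := by
  by_contra! h
  simpa [Nat.le_zero.mp h, hcard] using Fintype.one_lt_card (α := F)

section FrobeniusFixed

variable (m : ℕ) (F : Type*) [Field F] [Fintype F] [DecidableEq F]

-- The paper's `K`, `K^×` and `S`.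
def frobFixed : Finset F := {x | x ^ 2 ^ m = x}

def frobFixedUnits : Finset F := {x | x ^ 2 ^ m = x ∧ x ≠ 0}

def unitCircle : Finset F := {z | z ^ (2 ^ m + 1) = 1}

variable {m F}

@[simp] theorem mem_frobFixed {x : F} : x ∈ frobFixed m F ↔ x ^ 2 ^ m = x := by
  simp [frobFixed]

@[simp] theorem mem_frobFixedUnits {x : F} : x ∈ frobFixedUnits m F ↔ x ^ 2 ^ m = x ∧ x ≠ 0 := by
  simp [frobFixedUnits]

@[simp] theorem mem_unitCircle {z : F} : z ∈ unitCircle m F ↔ z ^ (2 ^ m + 1) = 1 := by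
  simp [unitCircle]

theorem mul_mem_frobFixed {x y : F} (hx : x ∈ frobFixed m F) (hy : y ∈ frobFixed m F) :
    x * y ∈ frobFixed m F := by
  rw [mem_frobFixed, mul_pow, mem_frobFixed.mp hx, mem_frobFixed.mp hy]

theorem inv_mem_frobFixed {x : F} (hx : x ∈ frobFixed m F) : x⁻¹ ∈ frobFixed m F := by
  rw [mem_frobFixed, inv_pow, mem_frobFixed.mp hx]

theorem pow_mem_frobFixed {x : F} (hx : x ∈ frobFixed m F) (k : ℕ) : x ^ k ∈ frobFixed m F := by
  rw [mem_frobFixed, ← pow_mul, mul_comm, pow_mul, mem_frobFixed.mp hx]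

theorem frobFixedUnits_eq_erase : frobFixedUnits m F = (frobFixed m F).erase 0 := by
  ext x
  simp [and_comm]

theorem card_unitCircle (hcard : Fintype.card F = 2 ^ (2 * m)) :
    #(unitCircle m F) = 2 ^ m + 1 := by
  refine card_filter_pow_eq_one_of_dvd ⟨2 ^ m - 1, ?_⟩
  rw [hcard, pow_mul', ← one_pow 2, Nat.sq_sub_sq, one_pow]

theorem card_frobFixedUnits (hcard : Fintype.card F = 2 ^ (2 * m)) :
    #(frobFixedUnits m F) = 2 ^ m - 1 := by
  have hq : 2 ^ m = 2 ^ m - 1 + 1 := (Nat.sub_add_cancel Nat.one_le_two_pow).symm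
  have hunits : frobFixedUnits m F = ({x | x ^ (2 ^ m - 1) = 1} : Finset F) := by
    ext x
    by_cases hx : x = 0
    · have : 1 < 2 ^ m := Nat.one_lt_two_pow (pos_of_card_eq_two_pow_two_mul hcard).ne'
      simp [hx, zero_pow (show 2 ^ m - 1 ≠ 0 by omega)]
    · rw [mem_frobFixedUnits, mem_filter, hq, pow_succ]
      simp [hx]
  rw [hunits]
  refine card_filter_pow_eq_one_of_dvd ⟨2 ^ m + 1, ?_⟩
  rw [hcard, pow_mul', ← one_pow 2, Nat.sq_sub_sq, one_pow, mul_comm]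

theorem card_frobFixed (hcard : Fintype.card F = 2 ^ (2 * m)) : #(frobFixed m F) = 2 ^ m := by
  have h0 : (0 : F) ∈ frobFixed m F := by simp
  have herase := card_erase_of_mem h0
  rw [← frobFixedUnits_eq_erase, card_frobFixedUnits hcard] at herase
  have hpos := card_pos.mpr ⟨0, h0⟩
  have := Nat.one_le_two_pow (n := m)
  omega

end FrobeniusFixed

section CharTwo

variable {m : ℕ} {F : Type*} [Field F] [Fintype F] [DecidableEq F] [CharP F 2]

theorem add_mem_frobFixed {x y : F} (hx : x ∈ frobFixed m F) (hy : y ∈ frobFixed m F) :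
    x + y ∈ frobFixed m F := by
  rw [mem_frobFixed, add_pow_char_pow, mem_frobFixed.mp hx, mem_frobFixed.mp hy]

theorem add_inv_mem_frobFixed_of_mem_unitCircle {z : F} (hz : z ∈ unitCircle m F) :
    z + z⁻¹ ∈ frobFixed m F := by
  have hz0 : z ≠ 0 := by rintro rfl; simp at hz
  have hconj : z ^ 2 ^ m = z⁻¹ :=
    eq_inv_of_mul_eq_one_left (by rw [← pow_succ, mem_unitCircle.mp hz])
  rw [mem_frobFixed, add_pow_char_pow, inv_pow, hconj, inv_inv, add_comm]

theorem add_inv_mem_frobFixed_of_mem_frobFixedUnits {y : F} (hy : y ∈ frobFixedUnits m F) :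
    y + y⁻¹ ∈ frobFixed m F := by
  have hyK : y ∈ frobFixed m F := mem_frobFixed.mpr (mem_frobFixedUnits.mp hy).1
  exact add_mem_frobFixed hyK (inv_mem_frobFixed hyK)

omit [Fintype F] [DecidableEq F] in
theorem eq_one_of_add_inv_eq_zero {z : F} (hz : z ≠ 0) (h : z + z⁻¹ = 0) : z = 1 := by
  have h' : z + z⁻¹ = 1 + 1⁻¹ := by rw [h, inv_one, CharTwo.add_self_eq_zero]
  simpa using eq_or_eq_inv_of_add_inv_eq_add_inv one_ne_zero hz h'

theorem eq_one_of_mem_unitCircle_of_mem_frobFixedUnits {z : F} (hS : z ∈ unitCircle m F)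
    (hK : z ∈ frobFixedUnits m F) : z = 1 := by
  obtain ⟨hzK, hz0⟩ := mem_frobFixedUnits.mp hK
  refine eq_one_of_add_inv_eq_zero hz0 ?_
  rw [mem_unitCircle, pow_succ, hzK] at hS
  rw [← eq_inv_of_mul_eq_one_left hS, CharTwo.add_self_eq_zero]

theorem card_fiber_unitCircle_add_card_fiber_frobFixedUnits_le_two (u : F) :
    #{z ∈ unitCircle m F | z + z⁻¹ = u} + #{y ∈ frobFixedUnits m F | y + y⁻¹ = u} ≤ 2 := by
  have hS0 : (0 : F) ∉ unitCircle m F := by simp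
  have hK0 : (0 : F) ∉ frobFixedUnits m F := by simp
  by_cases hu : u = 0
  · subst hu
    have hfiber : ∀ s : Finset F, (0 : F) ∉ s → #{z ∈ s | z + z⁻¹ = 0} ≤ 1 := fun s hs =>
      card_le_one.mpr fun a ha b hb => by
        simp only [mem_filter] at ha hb
        rw [eq_one_of_add_inv_eq_zero (ne_of_mem_of_not_mem ha.1 hs) ha.2,
          eq_one_of_add_inv_eq_zero (ne_of_mem_of_not_mem hb.1 hs) hb.2]
    have := hfiber _ hS0
    have := hfiber _ hK0
    omega
  · rw [← card_union_of_disjoint, ← filter_union]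
    · exact card_filter_add_inv_eq_le_two (by simp) u
    · refine disjoint_left.mpr fun z hzS hzK => hu ?_
      simp only [mem_filter] at hzS hzK
      rw [← hzS.2, eq_one_of_mem_unitCircle_of_mem_frobFixedUnits hzS.1 hzK.1, inv_one,
        CharTwo.add_self_eq_zero]

theorem card_fiber_unitCircle_add_card_fiber_frobFixedUnits_eq_two
    (hcard : Fintype.card F = 2 ^ (2 * m)) {u : F} (hu : u ∈ frobFixed m F) :
    #{z ∈ unitCircle m F | z + z⁻¹ = u} + #{y ∈ frobFixedUnits m F | y + y⁻¹ = u} = 2 := by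
  have htotal : ∑ u ∈ frobFixed m F,
      (#{z ∈ unitCircle m F | z + z⁻¹ = u} + #{y ∈ frobFixedUnits m F | y + y⁻¹ = u}) =
      ∑ _u ∈ frobFixed m F, 2 := by
    rw [sum_add_distrib,
      ← card_eq_sum_card_fiberwise fun _ hz => add_inv_mem_frobFixed_of_mem_unitCircle hz,
      ← card_eq_sum_card_fiberwise fun _ hy => add_inv_mem_frobFixed_of_mem_frobFixedUnits hy,
      card_unitCircle hcard, card_frobFixedUnits hcard, sum_const, card_frobFixed hcard,
      smul_eq_mul]
    have := Nat.one_le_two_pow (n := m)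
    omega
  exact (sum_eq_sum_iff_of_le fun u _ =>
    card_fiber_unitCircle_add_card_fiber_frobFixedUnits_le_two u).mp htotal u hu

theorem sum_unitCircle_add_sum_frobFixedUnits {M : Type*} [AddCommMonoid M]
    (hcard : Fintype.card F = 2 ^ (2 * m)) (f : F → M) :
    ∑ z ∈ unitCircle m F, f (z + z⁻¹) + ∑ y ∈ frobFixedUnits m F, f (y + y⁻¹) =
      2 • ∑ u ∈ frobFixed m F, f u := by
  rw [← sum_fiberwise_of_maps_to' fun _ hz => add_inv_mem_frobFixed_of_mem_unitCircle hz,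
    ← sum_fiberwise_of_maps_to' fun _ hy => add_inv_mem_frobFixed_of_mem_frobFixedUnits hy,
    ← sum_add_distrib, smul_sum]
  refine sum_congr rfl fun u hu => ?_
  rw [sum_const, sum_const, ← add_nsmul,
    card_fiber_unitCircle_add_card_fiber_frobFixedUnits_eq_two hcard hu]

end CharTwo

section Trace

open Polynomial

variable {m : ℕ} {F : Type*} [Field F] [Fintype F] [DecidableEq F] [CharP F 2]

omit [Fintype F] [DecidableEq F] in
theorem trM_add_s3 (x y : F) : trM m (x + y) = trM m x + trM m y := by
  simp only [trM, add_pow_char_pow, sum_add_distrib]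

omit [Fintype F] [DecidableEq F] in
theorem trM_sq_s3 (x : F) : trM m x ^ 2 = trM m (x ^ 2) := by
  simp only [trM, sum_pow_char, ← pow_mul, mul_comm]

omit [CharP F 2] in
theorem trM_sq_of_mem_frobFixed {x : F} (hx : x ∈ frobFixed m F) : trM m (x ^ 2) = trM m x := by
  have hshift : trM m (x ^ 2) + x = trM m x + x ^ 2 ^ m := by
    simp only [trM, ← pow_mul, ← pow_succ', ← sum_range_succ, sum_range_succ', pow_zero, pow_one]
  rwa [mem_frobFixed.mp hx, add_left_inj] at hshift

theorem trM_eq_zero_or_eq_one {x : F} (hx : x ∈ frobFixed m F) : trM m x = 0 ∨ trM m x = 1 := by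
  refine IsIdempotentElem.iff_eq_zero_or_one.mp ?_
  rw [IsIdempotentElem, ← sq, trM_sq_s3, trM_sq_of_mem_frobFixed hx]

theorem exists_trM_eq_one_s3 (hcard : Fintype.card F = 2 ^ (2 * m)) :
    ∃ w ∈ frobFixed m F, trM m w = 1 := by
  have hm := pos_of_card_eq_two_pow_two_mul hcard
  by_contra! h
  let P : F[X] := ∑ i ∈ range m, X ^ 2 ^ i
  have hP : P = 0 := by
    refine eq_zero_of_natDegree_lt_card_of_eval_eq_zero' P (frobFixed m F) (fun w hw => ?_) ?_
    · simpa [P, eval_finsetSum, trM] using (trM_eq_zero_or_eq_one hw).resolve_right (h w hw)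
    · calc P.natDegree ≤ 2 ^ (m - 1) := natDegree_sum_le_of_forall_le _ _ fun i hi => by
            rw [natDegree_X_pow]
            exact Nat.pow_le_pow_right two_pos (by simp at hi; omega)
        _ < 2 ^ m := Nat.pow_lt_pow_right one_lt_two (by omega)
        _ = #(frobFixed m F) := (card_frobFixed hcard).symm
  have hcoeff : P.coeff 1 = 1 := by simp [P, coeff_X_pow, eq_comm (a := 1), hm]
  simp [hP] at hcoeff

end Trace

section Kloosterman

variable {m : ℕ} {F : Type*} [Field F] [Fintype F] [DecidableEq F] [CharP F 2]

omit [Fintype F] in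
theorem eps_add_eps_add_one {t : F} (ht : t = 0 ∨ t = 1) : eps t + eps (t + 1) = 0 := by
  rcases ht with rfl | rfl <;> simp [eps, CharTwo.add_self_eq_zero]

theorem sum_frobFixed_eps_trM_mul_eq_zero (hcard : Fintype.card F = 2 ^ (2 * m)) {μ : F}
    (hμK : μ ∈ frobFixed m F) (hμ0 : μ ≠ 0) :
    ∑ u ∈ frobFixed m F, eps (trM m (μ * u)) = 0 := by
  obtain ⟨w, hwK, hw⟩ := exists_trM_eq_one_s3 hcard
  have hv0 : μ⁻¹ * w ≠ 0 := by
    refine mul_ne_zero (inv_ne_zero hμ0) ?_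
    rintro rfl
    simp [trM] at hw
  have hvK : μ⁻¹ * w ∈ frobFixed m F := mul_mem_frobFixed (inv_mem_frobFixed hμK) hwK
  refine sum_involution (fun u _ => u + μ⁻¹ * w) (fun u hu => ?_) (fun u _ _ => ?_)
    (fun u hu => add_mem_frobFixed hu hvK) (fun u _ => ?_)
  · rw [mul_add, mul_inv_cancel_left₀ hμ0, trM_add_s3, hw]
    exact eps_add_eps_add_one (trM_eq_zero_or_eq_one (mul_mem_frobFixed hμK hu))
  · simpa using hv0
  · rw [add_assoc, CharTwo.add_self_eq_zero, add_zero]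

theorem klooM_eq_sum_frobFixedUnits (hm : 0 < m) {μ : F} (hμK : μ ∈ frobFixed m F)
    (hμ0 : μ ≠ 0) : klooM m μ = ∑ y ∈ frobFixedUnits m F, eps (trM m (μ * (y + y⁻¹))) := by
  have hsqrt : ∀ x ∈ frobFixed m F, (x ^ 2) ^ 2 ^ (m - 1) = x ∧ (x ^ 2 ^ (m - 1)) ^ 2 = x := by
    intro x hx
    rw [← pow_mul, ← pow_mul, ← pow_succ', mul_comm, ← pow_succ', Nat.sub_add_cancel hm]
    exact ⟨mem_frobFixed.mp hx, mem_frobFixed.mp hx⟩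
  refine sum_nbij' (fun x => μ⁻¹ * x ^ 2) (fun y => (μ * y) ^ 2 ^ (m - 1)) ?_ ?_ ?_ ?_ ?_
  · intro x hx
    obtain ⟨hxK, hx0⟩ := mem_frobFixedUnits.mp hx
    refine mem_frobFixedUnits.mpr ⟨mem_frobFixed.mp ?_, by simp [hx0, hμ0]⟩
    exact mul_mem_frobFixed (inv_mem_frobFixed hμK) (pow_mem_frobFixed (mem_frobFixed.mpr hxK) 2)
  · intro y hy
    obtain ⟨hyK, hy0⟩ := mem_frobFixedUnits.mp hy
    refine mem_frobFixedUnits.mpr ⟨mem_frobFixed.mp ?_, by simp [hy0, hμ0]⟩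
    exact pow_mem_frobFixed (mul_mem_frobFixed hμK (mem_frobFixed.mpr hyK)) _
  · intro x hx
    rw [mul_inv_cancel_left₀ hμ0, (hsqrt x (mem_frobFixed.mpr (mem_frobFixedUnits.mp hx).1)).1]
  · intro y hy
    rw [(hsqrt _ (mul_mem_frobFixed hμK (mem_frobFixed.mpr (mem_frobFixedUnits.mp hy).1))).2,
      inv_mul_cancel_left₀ hμ0]
  · intro x hx
    obtain ⟨hxK, hx0⟩ := mem_frobFixedUnits.mp hx
    have hsq : μ * (μ⁻¹ * x ^ 2 + (μ⁻¹ * x ^ 2)⁻¹) = (x + μ * x⁻¹) ^ 2 := by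
      rw [CharTwo.add_sq]
      field_simp
    rw [hsq, trM_sq_of_mem_frobFixed]
    exact add_mem_frobFixed (mem_frobFixed.mpr hxK)
      (mul_mem_frobFixed hμK (inv_mem_frobFixed (mem_frobFixed.mpr hxK)))

end Kloosterman

theorem stmt3_general (m : ℕ) (F : Type*) [Field F] [Fintype F] [DecidableEq F]
    (hcard : Fintype.card F = 2 ^ (2 * m))
    (μ : F) (hμK : μ ^ (2 ^ m) = μ) (hμ0 : μ ≠ 0) :
    ∑ z ∈ Finset.univ.filter (fun z : F => z ^ (2 ^ m + 1) = 1),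
      eps (trM m (μ * (z + z⁻¹))) = - klooM m μ := by
  have := charP_two_of_card_eq_two_pow hcard
  have hμ : μ ∈ frobFixed m F := mem_frobFixed.mpr hμK
  have hdouble := sum_unitCircle_add_sum_frobFixedUnits hcard fun u => eps (trM m (μ * u))
  rw [sum_frobFixed_eps_trM_mul_eq_zero hcard hμ hμ0, smul_zero,
    ← klooM_eq_sum_frobFixedUnits (pos_of_card_eq_two_pow_two_mul hcard) hμ hμ0] at hdouble
  exact eq_neg_of_add_eq_zero_left hdouble

theorem stmt3 (m : ℕ) (hm : 0 < m) (F : Type*) [Field F] [Fintype F] [DecidableEq F]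
    (hcard : Fintype.card F = 2 ^ (2 * m))
    (μ : F) (hμK : μ ^ (2 ^ m) = μ) (hμ0 : μ ≠ 0) :
    ∑ z ∈ Finset.univ.filter (fun z : F => z ^ (2 ^ m + 1) = 1),
      eps (trM m (μ * (z + z⁻¹))) = - klooM m μ :=
  stmt3_general m F hcard μ hμK hμ0
end
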